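/- arXiv:0812.0440 — 2 statements merged into one kernel-verified Lean document; each statement's English description precedes it below -/
import Mathlib

section
/- For every n > 1 and every k with 1 ≤ k ≤ n, the number c_{n,k} of indecomposable permutations of S_n with k cycles satisfies c_{n,k} = Σ_{p=1}^{n−1} Σ_{i=1}^{min(k,p)} p · c_{p,i} · s_{n−p−1,k−i}. -/
/-- A permutation of `{0,...,n-1}` is indecomposable if it fixes no proper
initial segment `{0,...,p-1}` (for `1 ≤ p < n`) setwise. -/
def Indecomposable {n : ℕ} (α : Equiv.Perm (Fin n)) : Prop :=
  ∀ p : ℕ, 1 ≤ p → p < n → ∃ i : Fin n, (i : ℕ) < p ∧ p ≤ ((α i : ℕ))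

/-- The number of cycles (orbits) of a permutation: nontrivial cycles together
with fixed points, the latter counting as cycles of length 1. -/
noncomputable def cycleCount {n : ℕ} (α : Equiv.Perm (Fin n)) : ℕ :=
  α.cycleType.card + Nat.card {x : Fin n // α x = x}

/-- `c n k`: the number of indecomposable permutations of `S_n` with `k` cycles. -/
noncomputable def c (n k : ℕ) : ℕ :=
  Nat.card {α : Equiv.Perm (Fin n) // Indecomposable α ∧ cycleCount α = k}

/-- `s m j`: the number of permutations of `S_m` with `j` cycles
(unsigned Stirling number of the first kind); `s 0 0 = 1` and `s 0 j = 0` for `j > 0`. -/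
noncomputable def s (m j : ℕ) : ℕ :=
  Nat.card {α : Equiv.Perm (Fin m) // cycleCount α = j}

/-!
Removing the largest element `n` from its cycle sends a permutation `α ∈ S_n` that moves `n` to
a pair `(β, x)`, where `β ∈ S_{n-1}` has the same number of cycles as `α` and `x = α⁻¹ n`. The
permutation `α` is indecomposable exactly when `x` lies in the first block of `β`, whose length
`p` is the least positive length of a prefix that `β` maps onto itself. The permutations with
first block of length `p` are the block sums of an indecomposable permutation of `S_p` with an
arbitrary permutation of `S_{n-1-p}`, and their cycle numbers add. Counting the pairs `(β, x)` by
`p` and by the number `i` of cycles of the first block gives the recurrence.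
-/

open Equiv Equiv.Perm Finset

namespace Equiv.Perm

variable {α β : Type*}

theorem SameCycle.map_of_forall {σ : Perm α} {τ : Perm β} (f : α → β)
    (h : ∀ x, τ.SameCycle (f x) (f (σ x))) {x y : α} (hxy : σ.SameCycle x y) :
    τ.SameCycle (f x) (f y) := by
  obtain ⟨i, rfl⟩ := hxy
  induction i using Int.induction_on with
  | zero => simpa using SameCycle.refl τ (f x)
  | succ i ih => rw [add_comm, zpow_add, zpow_one, mul_apply]; exact ih.trans (h _)
  | pred i ih =>
    rw [sub_eq_neg_add, zpow_add, zpow_neg_one, mul_apply]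
    refine ih.trans ?_
    simpa using (h (σ⁻¹ ((σ ^ (-(i : ℤ))) x))).symm

theorem sameCycle_sumCongr {γ : Perm α} {δ : Perm β} {x y : α ⊕ β} :
    (sumCongr γ δ).SameCycle x y ↔ Sum.LiftRel γ.SameCycle δ.SameCycle x y := by
  have hpow (i : ℤ) : sumCongr γ δ ^ i = sumCongr (γ ^ i) (δ ^ i) := by
    simpa using (map_zpow (sumCongrHom α β) (γ, δ) i).symm
  rcases x with a | a <;> rcases y with b | b <;>
    simp [SameCycle, hpow]

theorem sameCycle_permCongr (e : α ≃ β) {σ : Perm α} {x y : β} :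
    (e.permCongr σ).SameCycle x y ↔ σ.SameCycle (e.symm x) (e.symm y) := by
  refine exists_congr fun i => ?_
  rw [← permCongrHom_coe, ← map_zpow, permCongrHom_coe, permCongr_apply, eq_symm_apply]

noncomputable def numCycles (σ : Perm α) : ℕ := Nat.card (Quotient (SameCycle.setoid σ))

theorem numCycles_eq_natCard {Q : Type*} {σ : Perm α} (F : α → Q) (hF : Function.Surjective F)
    (h : ∀ a b, F a = F b ↔ σ.SameCycle a b) : numCycles σ = Nat.card Q := by
  have hker : Setoid.ker F = SameCycle.setoid σ := Setoid.ext h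
  rw [numCycles, ← hker]
  exact Nat.card_congr (Setoid.quotientKerEquivOfSurjective F hF)

theorem numCycles_permCongr (e : α ≃ β) (σ : Perm α) :
    numCycles (e.permCongr σ) = numCycles σ :=
  numCycles_eq_natCard (Quotient.mk _ ∘ e.symm) (Quotient.mk_surjective.comp e.symm.surjective)
    fun _ _ => Quotient.eq.trans (sameCycle_permCongr e).symm

theorem numCycles_sumCongr [Finite α] [Finite β] (γ : Perm α) (δ : Perm β) :
    numCycles (sumCongr γ δ) = numCycles γ + numCycles δ := by
  rw [numCycles_eq_natCard
    (Sum.map (Quotient.mk (SameCycle.setoid γ)) (Quotient.mk (SameCycle.setoid δ)))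
    (Quotient.mk_surjective.sumMap Quotient.mk_surjective), Nat.card_sum]
  · rfl
  · rintro (a | a) (b | b) <;> simp [sameCycle_sumCongr, Quotient.eq, SameCycle.setoid]

theorem numCycles_decomposeOption_symm [DecidableEq α] (w : α) (τ : Perm α) :
    numCycles (decomposeOption.symm (some w, τ)) = numCycles τ := by
  -- `σ` is `τ` with `none` inserted just before `w`; collapsing `none` onto `w` matches the cycles.
  set σ := decomposeOption.symm (some w, τ)
  have hσ_none : σ none = some w := by simp [σ]
  have hσ_some (y : α) : σ (some y) = if τ y = w then none else some (τ y) := by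
    simp [σ, swap_apply_def]
  have step_some (y : α) : σ.SameCycle (some y) (some (τ y)) := by
    by_cases hy : τ y = w
    · have h2 := ((SameCycle.refl σ (some y)).apply_right).apply_right
      rwa [hσ_some, if_pos hy, hσ_none, ← hy] at h2
    · have h1 := (SameCycle.refl σ (some y)).apply_right
      rwa [hσ_some, if_neg hy] at h1
  have step_getD (z : Option α) : τ.SameCycle (z.getD w) ((σ z).getD w) := by
    rcases z with _ | y
    · simpa [hσ_none] using SameCycle.refl τ w
    · rw [hσ_some]
      split_ifs with hy
      · simpa [hy] using (SameCycle.refl τ y).apply_right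
      · exact (SameCycle.refl τ y).apply_right
  have to_some (z : Option α) : σ.SameCycle z (some (z.getD w)) := by
    rcases z with _ | y
    · show σ.SameCycle none (some w)
      rw [← hσ_none]; exact (SameCycle.refl σ none).apply_right
    · rfl
  refine numCycles_eq_natCard (fun z => Quotient.mk (SameCycle.setoid τ) (z.getD w))
    (fun q => q.inductionOn fun y => ⟨some y, rfl⟩) fun a b => Quotient.eq.trans ?_
  exact ⟨fun h => (to_some a).trans ((h.map_of_forall some step_some).trans (to_some b).symm),
    SameCycle.map_of_forall _ step_getD⟩

theorem cycleType_card_add_card_fixedPoints [Fintype α] [DecidableEq α] (σ : Perm α) :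
    σ.cycleType.card + Nat.card {x // σ x = x} = numCycles σ := by
  let F : α → σ.cycleFactorsFinset ⊕ {x // σ x = x} := fun a =>
    if h : σ a = a then .inr ⟨a, h⟩
    else .inl ⟨σ.cycleOf a, cycleOf_mem_cycleFactorsFinset_iff.2 (mem_support.2 h)⟩
  rw [numCycles_eq_natCard F ?_ ?_, Nat.card_sum, cycleType_def, Multiset.card_map,
    Nat.card_eq_fintype_card (α := σ.cycleFactorsFinset), Fintype.card_coe]
  · rfl
  · rintro (⟨c, hc⟩ | ⟨a, ha⟩)
    · obtain ⟨a, ha⟩ := (mem_cycleFactorsFinset_iff.1 hc).1.nonempty_support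
      have hσa : σ a ≠ a := mem_support.1 (mem_cycleFactorsFinset_support_le hc ha)
      exact ⟨a, by simp [F, hσa, ← cycle_is_cycleOf ha hc]⟩
    · exact ⟨a, by simp [F, ha]⟩
  · intro a b
    by_cases ha : σ a = a <;> by_cases hb : σ b = b
    · simp only [F, dif_pos ha, dif_pos hb, Sum.inr.injEq, Subtype.mk.injEq]
      exact ⟨fun h => h ▸ SameCycle.rfl, fun h => h.eq_of_left ha⟩
    · simp only [F, dif_pos ha, dif_neg hb, reduceCtorEq, false_iff]
      exact fun h => hb (h.eq_of_left ha ▸ ha)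
    · simp only [F, dif_neg ha, dif_pos hb, reduceCtorEq, false_iff]
      exact fun h => ha (h.eq_of_right hb ▸ hb)
    · simp only [F, dif_neg ha, dif_neg hb, Sum.inl.injEq, Subtype.mk.injEq]
      exact (sameCycle_iff_cycleOf_eq_of_mem_support (mem_support.2 ha) (mem_support.2 hb)).symm

theorem numCycles_pos [Finite α] [Nonempty α] (σ : Perm α) : 0 < numCycles σ :=
  have : Nonempty (Quotient (SameCycle.setoid σ)) := .map (Quotient.mk _) ‹_›
  Nat.card_pos

theorem numCycles_le_natCard [Finite α] (σ : Perm α) : numCycles σ ≤ Nat.card α :=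
  Nat.card_le_card_of_surjective _ Quotient.mk_surjective

end Equiv.Perm

def IsPrefixInvariant {m : ℕ} (β : Perm (Fin m)) (q : ℕ) : Prop :=
  ∀ i : Fin m, (i : ℕ) < q → (β i : ℕ) < q

noncomputable def firstBlock {m : ℕ} (β : Perm (Fin m)) : ℕ :=
  sInf {q | 0 < q ∧ IsPrefixInvariant β q}

section FirstBlock

variable {m : ℕ} {β : Perm (Fin m)} {q : ℕ}

theorem isPrefixInvariant_of_le (hq : m ≤ q) : IsPrefixInvariant β q :=
  fun i _ => (β i).2.trans_le hq

theorem firstBlock_mem : firstBlock β ∈ {q | 0 < q ∧ IsPrefixInvariant β q} :=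
  Nat.sInf_mem ⟨m + 1, m.succ_pos, isPrefixInvariant_of_le m.le_succ⟩

theorem firstBlock_pos : 0 < firstBlock β :=
  firstBlock_mem.1

theorem isPrefixInvariant_firstBlock : IsPrefixInvariant β (firstBlock β) :=
  firstBlock_mem.2

theorem firstBlock_le (hq : 0 < q) (h : IsPrefixInvariant β q) : firstBlock β ≤ q :=
  Nat.sInf_le ⟨hq, h⟩

theorem firstBlock_le_card (hm : 0 < m) : firstBlock β ≤ m :=
  firstBlock_le hm (isPrefixInvariant_of_le le_rfl)

theorem indecomposable_iff_firstBlock_eq (hm : 0 < m) : Indecomposable β ↔ firstBlock β = m := by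
  refine ⟨fun h => (firstBlock_le_card hm).antisymm (not_lt.1 fun hlt => ?_), fun h p hp hpm => ?_⟩
  · obtain ⟨i, hi, hβi⟩ := h _ firstBlock_pos hlt
    exact (isPrefixInvariant_firstBlock i hi).not_ge hβi
  · by_contra! hp'
    exact (firstBlock_le hp hp').not_gt (by omega)

end FirstBlock

/-- `insertLast β x` is `β` with the new element `m` inserted into its cycle between `x` and
`β x`. -/
noncomputable def insertLast {m : ℕ} (β : Perm (Fin m)) (x : Fin m) : Perm (Fin (m + 1)) :=
  finSuccEquivLast.symm.permCongr (decomposeOption.symm (some (β x), β))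

section InsertLast

variable {m : ℕ} (β : Perm (Fin m)) (x : Fin m)

theorem insertLast_castSucc_of_ne {y : Fin m} (hy : y ≠ x) :
    insertLast β x y.castSucc = (β y).castSucc := by
  simp [insertLast, permCongr_apply, swap_apply_of_ne_of_ne, hy]

theorem insertLast_castSucc_self : insertLast β x x.castSucc = Fin.last m := by
  simp [insertLast, permCongr_apply]

theorem numCycles_insertLast : numCycles (insertLast β x) = numCycles β := by
  rw [insertLast, numCycles_permCongr, numCycles_decomposeOption_symm]

theorem insertLast_injective :
    Function.Injective fun βx : Perm (Fin m) × Fin m => insertLast βx.1 βx.2 := by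
  rintro ⟨β, x⟩ ⟨β', x'⟩ h
  obtain ⟨hx, rfl⟩ := Prod.ext_iff.1 <|
    decomposeOption.symm.injective (finSuccEquivLast.symm.permCongr.injective h)
  simpa using hx

theorem exists_insertLast_eq {α : Perm (Fin (m + 1))} (h : α (Fin.last m) ≠ Fin.last m) :
    ∃ β x, insertLast β x = α := by
  set α' := finSuccEquivLast.permCongr α
  obtain ⟨w, hw⟩ : ∃ w, α' none = some w :=
    Option.ne_none_iff_exists'.1 (by simpa [α', permCongr_apply, ← eq_symm_apply] using h)
  refine ⟨removeNone α', (removeNone α').symm w, ?_⟩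
  rw [insertLast, apply_symm_apply, ← hw]
  change finSuccEquivLast.symm.permCongr (decomposeOption.symm (decomposeOption α')) = α
  ext i
  simp [α', permCongr_apply]

theorem indecomposable_insertLast_iff :
    Indecomposable (insertLast β x) ↔ (x : ℕ) < firstBlock β := by
  constructor
  · intro h
    by_contra! hle
    obtain ⟨i, hi, hαi⟩ := h (firstBlock β) firstBlock_pos (by omega)
    have hj : (i.castLT (by omega) : Fin m) ≠ x := fun hj => by
      rw [← hj, Fin.val_castLT] at hle
      omega
    rw [← Fin.castSucc_castLT i (by omega), insertLast_castSucc_of_ne _ _ hj] at hαi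
    exact (isPrefixInvariant_firstBlock _ hi).not_ge hαi
  · intro hx p hp hpm
    by_cases hxp : (x : ℕ) < p
    · exact ⟨x.castSucc, hxp, by rw [insertLast_castSucc_self, Fin.val_last]; omega⟩
    · have hnot : ¬ IsPrefixInvariant β p := fun hp' => (firstBlock_le hp hp').not_gt (by omega)
      simp only [IsPrefixInvariant, not_forall, not_lt] at hnot
      obtain ⟨j, hj, hβj⟩ := hnot
      have hjx : j ≠ x := fun h => by subst h; omega
      exact ⟨j.castSucc, hj, by simpa [insertLast_castSucc_of_ne _ _ hjx]⟩

theorem Indecomposable.apply_last_ne {α : Perm (Fin (m + 1))} (hm : 0 < m)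
    (h : Indecomposable α) : α (Fin.last m) ≠ Fin.last m := by
  obtain ⟨i, hi, hαi⟩ := h m hm m.lt_succ_self
  have hαi' : α i = Fin.last m := Fin.ext (by rw [Fin.val_last]; omega)
  intro hlast
  rw [← hlast] at hαi'
  simp [α.injective hαi'] at hi

end InsertLast

def blockSum {p q : ℕ} (γ : Perm (Fin p)) (δ : Perm (Fin q)) : Perm (Fin (p + q)) :=
  finSumFinEquiv.permCongr (Perm.sumCongr γ δ)

section BlockSum

variable {p q : ℕ} (γ : Perm (Fin p)) (δ : Perm (Fin q))

theorem blockSum_castAdd (i : Fin p) : blockSum γ δ (Fin.castAdd q i) = Fin.castAdd q (γ i) := by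
  simp [blockSum, permCongr_apply]

theorem numCycles_blockSum : numCycles (blockSum γ δ) = numCycles γ + numCycles δ := by
  rw [blockSum, numCycles_permCongr, numCycles_sumCongr]

theorem blockSum_injective :
    Function.Injective fun γδ : Perm (Fin p) × Perm (Fin q) => blockSum γδ.1 γδ.2 :=
  finSumFinEquiv.permCongr.injective.comp (sumCongrHom_injective (α := Fin p) (β := Fin q))

theorem isPrefixInvariant_blockSum_iff {r : ℕ} (hr : r ≤ p) :
    IsPrefixInvariant (blockSum γ δ) r ↔ IsPrefixInvariant γ r := by
  refine ⟨fun h i hi => ?_, fun h i hi => ?_⟩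
  · simpa [blockSum_castAdd] using h (Fin.castAdd q i) hi
  · rw [← Fin.castAdd_castLT q i (by omega), blockSum_castAdd]
    exact h _ hi

theorem firstBlock_blockSum (hp : 0 < p) : firstBlock (blockSum γ δ) = firstBlock γ := by
  have hle : firstBlock (blockSum γ δ) ≤ p :=
    firstBlock_le hp
      ((isPrefixInvariant_blockSum_iff γ δ le_rfl).2 (isPrefixInvariant_of_le le_rfl))
  exact le_antisymm
    (firstBlock_le firstBlock_pos
      ((isPrefixInvariant_blockSum_iff γ δ (firstBlock_le_card hp)).2 isPrefixInvariant_firstBlock))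
    (firstBlock_le firstBlock_pos
      ((isPrefixInvariant_blockSum_iff γ δ hle).1 isPrefixInvariant_firstBlock))

theorem exists_blockSum_eq {β : Perm (Fin (p + q))} (h : IsPrefixInvariant β p) :
    ∃ γ δ, blockSum γ δ = β := by
  have hmaps : Set.MapsTo (finSumFinEquiv.symm.permCongr β) (Set.range Sum.inl)
      (Set.range Sum.inl) := by
    rintro _ ⟨i, rfl⟩
    have hβi := h (Fin.castAdd q i) i.2
    refine ⟨(β (Fin.castAdd q i)).castLT hβi, ?_⟩
    simp [permCongr_apply, ← finSumFinEquiv_symm_apply_castAdd]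
  obtain ⟨⟨γ, δ⟩, hγδ⟩ := mem_sumCongrHom_range_of_perm_mapsTo_inl hmaps
  refine ⟨γ, δ, ?_⟩
  change finSumFinEquiv.permCongr (sumCongrHom _ _ (γ, δ)) = β
  rw [hγδ, ← permCongr_symm, apply_symm_apply]

end BlockSum

theorem cycleCount_eq_numCycles {n : ℕ} (α : Perm (Fin n)) : cycleCount α = numCycles α :=
  cycleType_card_add_card_fixedPoints α

theorem card_filter_prod_eq_sum {A B : Type*} [Fintype A] [Fintype B] (P : A → Prop)
    [DecidablePred P] (f : A → ℕ) (R : ℕ → B → Prop) [∀ i, DecidablePred (R i)] (t : Finset ℕ)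
    (ht : ∀ a b, P a → R (f a) b → f a ∈ t) :
    #{ab : A × B | P ab.1 ∧ R (f ab.1) ab.2} =
      ∑ i ∈ t, #{a | P a ∧ f a = i} * #{b | R i b} := by
  rw [card_eq_sum_card_fiberwise (f := fun ab => f ab.1) (t := t)
    fun ab hab => ht _ _ (mem_filter.1 hab).2.1 (mem_filter.1 hab).2.2]
  refine sum_congr rfl fun i _ => ?_
  rw [← card_product, ← filter_product]
  congr 1
  ext ⟨a, b⟩
  simp only [mem_filter, mem_univ, true_and, mem_product]
  constructor
  · rintro ⟨⟨hP, hR⟩, rfl⟩; exact ⟨⟨hP, rfl⟩, hR⟩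
  · rintro ⟨⟨hP, rfl⟩, hR⟩; exact ⟨⟨hP, hR⟩, rfl⟩

section Counting

open scoped Classical

theorem c_eq_card (n k : ℕ) :
    c n k = #{α : Perm (Fin n) | Indecomposable α ∧ numCycles α = k} := by
  simp [c, Nat.card_eq_fintype_card, Fintype.card_subtype, cycleCount_eq_numCycles]

theorem s_eq_card (m j : ℕ) : s m j = #{α : Perm (Fin m) | numCycles α = j} := by
  simp [s, Nat.card_eq_fintype_card, Fintype.card_subtype, cycleCount_eq_numCycles]

theorem card_indecomposable_succ {m : ℕ} (hm : 0 < m) (k : ℕ) :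
    #{α : Perm (Fin (m + 1)) | Indecomposable α ∧ numCycles α = k} =
      #{βx : Perm (Fin m) × Fin m | numCycles βx.1 = k ∧ (βx.2 : ℕ) < firstBlock βx.1} := by
  symm
  refine card_nbij (fun βx => insertLast βx.1 βx.2) (fun βx hβx => ?_)
    insertLast_injective.injOn fun α hα => ?_
  · simp only [coe_filter, mem_univ, true_and, Set.mem_ofPred_eq] at hβx ⊢
    exact ⟨(indecomposable_insertLast_iff _ _).2 hβx.2, (numCycles_insertLast _ _).trans hβx.1⟩
  · simp only [coe_filter, mem_univ, true_and, Set.mem_ofPred_eq] at hα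
    obtain ⟨β, x, rfl⟩ := exists_insertLast_eq (hα.1.apply_last_ne hm)
    refine ⟨(β, x), ?_, rfl⟩
    simpa [numCycles_insertLast, indecomposable_insertLast_iff, and_comm] using hα

theorem card_firstBlock_eq_card_indecomposable_prod {p q : ℕ} (hp : 0 < p) (k : ℕ) :
    #{β : Perm (Fin (p + q)) | numCycles β = k ∧ firstBlock β = p} =
      #{γδ : Perm (Fin p) × Perm (Fin q) |
        Indecomposable γδ.1 ∧ numCycles γδ.1 + numCycles γδ.2 = k} := by
  symm
  refine card_nbij (fun γδ => blockSum γδ.1 γδ.2) (fun γδ hγδ => ?_)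
    blockSum_injective.injOn fun β hβ => ?_
  · simp only [coe_filter, mem_univ, true_and, Set.mem_ofPred_eq] at hγδ ⊢
    exact ⟨(numCycles_blockSum _ _).trans hγδ.2,
      (firstBlock_blockSum _ _ hp).trans ((indecomposable_iff_firstBlock_eq hp).1 hγδ.1)⟩
  · simp only [coe_filter, mem_univ, true_and, Set.mem_ofPred_eq] at hβ
    obtain ⟨γ, δ, rfl⟩ := exists_blockSum_eq (hβ.2 ▸ isPrefixInvariant_firstBlock)
    refine ⟨(γ, δ), ?_, rfl⟩
    simp only [coe_filter, mem_univ, true_and, Set.mem_ofPred_eq]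
    rw [indecomposable_iff_firstBlock_eq hp, ← firstBlock_blockSum γ δ hp, ← numCycles_blockSum]
    exact hβ.symm

theorem card_firstBlock_eq {m p : ℕ} (hp : 0 < p) (hpm : p ≤ m) (k : ℕ) :
    #{β : Perm (Fin m) | numCycles β = k ∧ firstBlock β = p} =
      ∑ i ∈ Icc 1 (min k p), c p i * s (m - p) (k - i) := by
  obtain ⟨q, rfl⟩ := Nat.exists_eq_add_of_le hpm
  have : Nonempty (Fin p) := ⟨⟨0, hp⟩⟩
  rw [card_firstBlock_eq_card_indecomposable_prod hp, card_filter_prod_eq_sum Indecomposable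
    numCycles (fun i δ => i + numCycles δ = k) (Icc 1 (min k p)) fun γ δ _ h => ?_]
  · refine sum_congr rfl fun i hi => ?_
    have hik : i ≤ k := (mem_Icc.1 hi).2.trans (min_le_left _ _)
    rw [c_eq_card, s_eq_card, Nat.add_sub_cancel_left]
    congr 2
    ext δ
    simp only [mem_filter, mem_univ, true_and]
    omega
  · have := numCycles_pos γ
    have : numCycles γ ≤ p := by simpa using numCycles_le_natCard γ
    simp only [mem_Icc]
    omega

end Counting

theorem indec_stirling_recurrence2_general (n k : ℕ) (hn : 1 < n) :
    c n k =
      ∑ p ∈ Finset.Icc 1 (n - 1), ∑ i ∈ Finset.Icc 1 (min k p),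
        p * c p i * s (n - p - 1) (k - i) := by
  obtain ⟨m, rfl⟩ : ∃ m, n = m + 1 := ⟨n - 1, by omega⟩
  have hm : 0 < m := by omega
  have hfirstBlock (β : Perm (Fin m)) : firstBlock β ∈ Icc 1 m :=
    mem_Icc.2 ⟨firstBlock_pos, firstBlock_le_card hm⟩
  rw [c_eq_card, card_indecomposable_succ hm, card_filter_prod_eq_sum (fun β => numCycles β = k)
    firstBlock (fun p (x : Fin m) => (x : ℕ) < p) (Icc 1 m) fun β _ _ _ => hfirstBlock β,
    Nat.add_sub_cancel]
  refine sum_congr rfl fun p hp => ?_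
  obtain ⟨hp1, hpm⟩ := mem_Icc.1 hp
  rw [card_firstBlock_eq hp1 hpm, Fin.card_filter_val_lt, min_eq_right hpm, sum_mul,
    show m + 1 - p - 1 = m - p by omega]
  exact sum_congr rfl fun i _ => by ring

theorem indec_stirling_recurrence2 (n k : ℕ) (hn : 1 < n) (hk1 : 1 ≤ k) (hk2 : k ≤ n) :
    c n k =
      ∑ p ∈ Finset.Icc 1 (n - 1), ∑ i ∈ Finset.Icc 1 (min k p),
        p * c p i * s (n - p - 1) (k - i) :=
  indec_stirling_recurrence2_general n k hn
end

section
/- For n ≥ 1 let P_n(x,y) = Σ_{α ∈ S_n} x^{c(α)} y^{m(α)}, where c(α) is the number of cycles of α and m(α) its number of left-to-right maxima, let P_0 = 1, and let I_n(x,y) be the same sum restricted to indecomposable permutations of S_n. Then, as formal power series in z with coefficients in ℤ[x,y], (Σ_{n≥0} P_n(x,y) z^n) · (1 − Σ_{n≥1} I_n(x,y) z^n) = 1; equivalently, the number of permutations of S_n with p cycles and q left-to-right maxima is the coefficient of z^n x^p y^q in 1/(1 − Σ_{n≥1} I_n(x,y) z^n). -/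
/-- The number of left-to-right maxima of a permutation. -/
noncomputable def lrMaxCount {n : ℕ} (α : Equiv.Perm (Fin n)) : ℕ :=
  Nat.card {i : Fin n // ∀ j : Fin n, j < i → α j < α i}

/-- `P n = ∑_{α ∈ Sₙ} x^{c(α)} y^{m(α)}`, with `x = X true`, `y = X false`;
note that `P 0 = 1`. -/
noncomputable def Ppoly (n : ℕ) : MvPolynomial Bool ℤ :=
  ∑ α : Equiv.Perm (Fin n),
    MvPolynomial.X true ^ cycleCount α * MvPolynomial.X false ^ lrMaxCount α

open scoped Classical in
/-- `I n`: the same sum restricted to indecomposable permutations of `Sₙ`. -/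
noncomputable def Ipoly (n : ℕ) : MvPolynomial Bool ℤ :=
  ∑ α : Equiv.Perm (Fin n),
    if Indecomposable α then
      MvPolynomial.X true ^ cycleCount α * MvPolynomial.X false ^ lrMaxCount α
    else 0

/-!
Every permutation `σ` of `Fin n`, `n ≥ 1`, is uniquely a direct sum `a ⊕ b`, where `a` is an
indecomposable permutation of `Fin p` and `b` an arbitrary permutation of `Fin (n - p)`: `p` is
the least positive `k` such that `σ` maps `{0, …, k - 1}` onto itself. Both the number of cycles
and the number of left-to-right maxima are additive under direct sums, so
`Pₙ = ∑_{p = 1}^{n} I_p P_{n - p}`, that is `P = 1 + I P` as power series.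
-/

namespace Equiv.Perm

variable {α β : Type*} [Fintype α] [DecidableEq α] [Fintype β] [DecidableEq β]

theorem cycleType_permCongr (e : α ≃ β) (σ : Perm α) :
    (e.permCongr σ).cycleType = σ.cycleType := by
  let f : α ≃ {b : β // True} := e.trans (subtypeUnivEquiv fun _ => trivial).symm
  have : e.permCongr σ = σ.extendDomain f := by
    ext x
    obtain ⟨y, rfl⟩ := e.surjective x
    simpa [f] using (extendDomain_apply_image σ f y).symm
  rw [this, cycleType_extendDomain]

theorem cycleType_sumCongr (a : Perm α) (b : Perm β) :
    (sumCongr a b).cycleType = a.cycleType + b.cycleType := by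
  have hsplit : sumCongr a b = sumCongr a 1 * sumCongr 1 b := by
    rw [sumCongr_mul, mul_one, one_mul]
  have hdisj : (sumCongr a 1).Disjoint (sumCongr 1 b) := by
    rintro (x | y) <;> simp
  have hl : sumCongr a (1 : Perm β) = a.extendDomain sumIsLeft.symm := by
    ext (x | y)
    · exact (extendDomain_apply_image a sumIsLeft.symm x).symm
    · simp [extendDomain_apply_not_subtype]
  have hr : sumCongr (1 : Perm α) b = b.extendDomain sumIsRight.symm := by
    ext (x | y)
    · simp [extendDomain_apply_not_subtype]
    · exact (extendDomain_apply_image b sumIsRight.symm y).symm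
  rw [hsplit, hdisj.cycleType_mul, hl, hr, cycleType_extendDomain, cycleType_extendDomain]

end Equiv.Perm

section

open Equiv Finset

variable {n p q : ℕ}

lemma Fin.natCard_subtype_add (P : Fin (p + q) → Prop) :
    Nat.card {i // P i} =
      Nat.card {i : Fin p // P (Fin.castAdd q i)} + Nat.card {j : Fin q // P (Fin.natAdd p j)} :=
  calc Nat.card {i // P i} = Nat.card {x : Fin p ⊕ Fin q // P (finSumFinEquiv x)} :=
        Nat.card_congr (finSumFinEquiv.symm.subtypeEquiv fun i => by simp)
    _ = _ := by rw [Nat.card_congr subtypeSum, Nat.card_sum]; simp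

lemma cycleCount_eq_card_add_sub (σ : Perm (Fin n)) :
    cycleCount σ = σ.cycleType.card + (n - σ.cycleType.sum) := by
  have h := σ.card_fixedPoints
  rw [Fintype.card_fin] at h
  rw [cycleCount, ← h, Nat.card_eq_fintype_card]
  rfl

def StabilizesPrefix (k : ℕ) (σ : Perm (Fin n)) : Prop :=
  ∀ i : Fin n, (i : ℕ) < k → (σ i : ℕ) < k

instance (k : ℕ) (σ : Perm (Fin n)) : Decidable (StabilizesPrefix k σ) :=
  inferInstanceAs (Decidable (∀ i : Fin n, (i : ℕ) < k → (σ i : ℕ) < k))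

lemma stabilizesPrefix_of_le {k : ℕ} (σ : Perm (Fin n)) (h : n ≤ k) :
    StabilizesPrefix k σ :=
  fun i _ => (σ i).isLt.trans_le h

lemma indecomposable_iff (σ : Perm (Fin n)) :
    Indecomposable σ ↔ ∀ k, 1 ≤ k → k < n → ¬ StabilizesPrefix k σ := by
  simp [Indecomposable, StabilizesPrefix]

-- `n + 1` rather than `n`, so that the witness is positive also for `n = 0`.
lemma exists_stabilizesPrefix (σ : Perm (Fin n)) : ∃ k, 1 ≤ k ∧ StabilizesPrefix k σ :=
  ⟨n + 1, Nat.le_add_left 1 n, stabilizesPrefix_of_le σ n.le_succ⟩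

def firstBlockLength (σ : Perm (Fin n)) : ℕ :=
  Nat.find (exists_stabilizesPrefix σ)

lemma one_le_firstBlockLength (σ : Perm (Fin n)) : 1 ≤ firstBlockLength σ :=
  (Nat.find_spec (exists_stabilizesPrefix σ)).1

lemma stabilizesPrefix_firstBlockLength (σ : Perm (Fin n)) :
    StabilizesPrefix (firstBlockLength σ) σ :=
  (Nat.find_spec (exists_stabilizesPrefix σ)).2

lemma firstBlockLength_le (σ : Perm (Fin n)) (hn : 1 ≤ n) : firstBlockLength σ ≤ n :=
  Nat.find_min' _ ⟨hn, stabilizesPrefix_of_le σ le_rfl⟩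

def directSum (a : Perm (Fin p)) (b : Perm (Fin q)) : Perm (Fin (p + q)) :=
  finSumFinEquiv.permCongr (a.sumCongr b)

section DirectSum

variable (a : Perm (Fin p)) (b : Perm (Fin q))

@[simp]
lemma directSum_castAdd (i : Fin p) :
    directSum a b (Fin.castAdd q i) = Fin.castAdd q (a i) := by
  simp [directSum, permCongr_apply]

@[simp]
lemma directSum_natAdd (j : Fin q) :
    directSum a b (Fin.natAdd p j) = Fin.natAdd p (b j) := by
  simp [directSum, permCongr_apply]

lemma directSum_injective :
    Function.Injective fun ab : Perm (Fin p) × Perm (Fin q) => directSum ab.1 ab.2 := by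
  rintro ⟨a, b⟩ ⟨a', b'⟩ h
  refine Prod.ext (Equiv.ext fun i => ?_) (Equiv.ext fun j => ?_)
  · simpa using DFunLike.congr_fun h (Fin.castAdd q i)
  · simpa using DFunLike.congr_fun h (Fin.natAdd p j)

lemma cycleCount_directSum : cycleCount (directSum a b) = cycleCount a + cycleCount b := by
  have ha := a.sum_cycleType_le
  have hb := b.sum_cycleType_le
  simp only [Fintype.card_fin] at ha hb
  rw [cycleCount_eq_card_add_sub, cycleCount_eq_card_add_sub, cycleCount_eq_card_add_sub,
    directSum, Perm.cycleType_permCongr, Perm.cycleType_sumCongr, Multiset.card_add,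
    Multiset.sum_add]
  omega

-- Every letter of the first block lies below every letter of the second, so the left-to-right
-- maxima of the two blocks do not interact.
lemma lrMaxCount_directSum : lrMaxCount (directSum a b) = lrMaxCount a + lrMaxCount b := by
  rw [lrMaxCount, Fin.natCard_subtype_add]
  congr 1
  · refine Nat.card_congr (subtypeEquivRight fun i => ?_)
    simp [Fin.forall_fin_add, Fin.lt_def, -Fin.val_fin_lt]
    omega
  · refine Nat.card_congr (subtypeEquivRight fun i => ?_)
    simp [Fin.forall_fin_add, Fin.lt_def, -Fin.val_fin_lt]
    omega

lemma stabilizesPrefix_directSum_iff {k : ℕ} (hk : k ≤ p) :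
    StabilizesPrefix k (directSum a b) ↔ StabilizesPrefix k a := by
  simp only [StabilizesPrefix, Fin.forall_fin_add, directSum_castAdd, directSum_natAdd,
    Fin.val_castAdd, Fin.val_natAdd]
  exact ⟨And.left, fun h => ⟨h, fun j hj => by omega⟩⟩

lemma firstBlockLength_directSum_eq_iff (hp : 1 ≤ p) :
    firstBlockLength (directSum a b) = p ↔ Indecomposable a := by
  rw [firstBlockLength, Nat.find_eq_iff, indecomposable_iff]
  refine ⟨fun h k hk hkp hs => h.2 k hkp ⟨hk, ?_⟩,
    fun h => ⟨⟨hp, ?_⟩, fun k hkp hs => h k hs.1 hkp ?_⟩⟩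
  · exact (stabilizesPrefix_directSum_iff a b hkp.le).2 hs
  · exact (stabilizesPrefix_directSum_iff a b le_rfl).2 (stabilizesPrefix_of_le a le_rfl)
  · exact (stabilizesPrefix_directSum_iff a b hkp.le).1 hs.2

end DirectSum

lemma exists_directSum_eq {σ : Perm (Fin (p + q))} (h : StabilizesPrefix p σ) :
    ∃ a b, directSum a b = σ := by
  let τ := finSumFinEquiv.symm.permCongr σ
  have hτ : Set.MapsTo τ (Set.range Sum.inl) (Set.range Sum.inl) := by
    rintro _ ⟨i, rfl⟩
    refine ⟨Fin.castLT (σ (Fin.castAdd q i)) (h _ (by simp)), ?_⟩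
    simp [τ, permCongr_apply, ← finSumFinEquiv_symm_apply_castAdd]
  obtain ⟨⟨a, b⟩, hab⟩ := Perm.mem_sumCongrHom_range_of_perm_mapsTo_inl hτ
  refine ⟨a, b, ?_⟩
  rw [Perm.sumCongrHom_apply] at hab
  rw [directSum, hab]
  exact finSumFinEquiv.permCongr.apply_symm_apply σ

noncomputable def weight (σ : Perm (Fin n)) : MvPolynomial Bool ℤ :=
  MvPolynomial.X true ^ cycleCount σ * MvPolynomial.X false ^ lrMaxCount σ

lemma weight_directSum (a : Perm (Fin p)) (b : Perm (Fin q)) :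
    weight (directSum a b) = weight a * weight b := by
  rw [weight, weight, weight, cycleCount_directSum, lrMaxCount_directSum, pow_add, pow_add]
  ring

lemma Ppoly_eq_sum_weight (n : ℕ) : Ppoly n = ∑ σ : Perm (Fin n), weight σ := rfl

open scoped Classical in
lemma Ipoly_eq_sum_weight (n : ℕ) :
    Ipoly n = ∑ σ : Perm (Fin n) with Indecomposable σ, weight σ :=
  (sum_filter _ _).symm

open scoped Classical in
lemma sum_weight_filter_firstBlockLength_eq (hn : p + q = n) (hp : 1 ≤ p) :
    ∑ σ : Perm (Fin n) with firstBlockLength σ = p, weight σ = Ipoly p * Ppoly q := by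
  subst hn
  rw [Ipoly_eq_sum_weight, Ppoly_eq_sum_weight, sum_mul_sum, ← sum_product']
  symm
  refine sum_nbij (fun ab => directSum ab.1 ab.2) ?_ directSum_injective.injOn ?_ ?_
  · rintro ⟨a, b⟩ hab
    simp only [mem_product, mem_filter] at hab ⊢
    exact ⟨mem_univ _, (firstBlockLength_directSum_eq_iff a b hp).2 hab.1.2⟩
  · intro σ hσ
    simp only [coe_filter, Set.mem_ofPred_eq, mem_univ, true_and] at hσ
    obtain ⟨a, b, rfl⟩ := exists_directSum_eq (hσ ▸ stabilizesPrefix_firstBlockLength σ)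
    exact ⟨(a, b), by simp [(firstBlockLength_directSum_eq_iff a b hp).1 hσ], rfl⟩
  · rintro ⟨a, b⟩ -
    exact (weight_directSum a b).symm

lemma Ppoly_succ (n : ℕ) :
    Ppoly (n + 1) = ∑ pq ∈ antidiagonal n, Ipoly (pq.1 + 1) * Ppoly pq.2 := by
  rw [Nat.sum_antidiagonal_eq_sum_range_succ_mk, Ppoly_eq_sum_weight,
    ← sum_fiberwise_of_maps_to (g := fun σ => firstBlockLength σ - 1) (t := range (n + 1))
      fun σ _ => mem_range.2 (by have := firstBlockLength_le σ n.succ_pos; omega)]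
  refine sum_congr rfl fun k hk => ?_
  rw [← sum_weight_filter_firstBlockLength_eq (n := n + 1) (by simp at hk; omega) (by omega)]
  refine sum_congr (filter_congr fun σ _ => ?_) fun _ _ => rfl
  have := one_le_firstBlockLength σ
  omega

lemma Ppoly_zero : Ppoly 0 = 1 := by
  simp [Ppoly, cycleCount, lrMaxCount]

end

theorem perm_generating_series :
    (PowerSeries.mk fun n => Ppoly n) *
      (1 - PowerSeries.mk fun n => if n = 0 then 0 else Ipoly n) = 1 := by
  set P := PowerSeries.mk fun n => Ppoly n
  set I := PowerSeries.mk fun n => if n = 0 then 0 else Ipoly n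
  have h : P = 1 + I * P := by
    refine PowerSeries.ext fun n => ?_
    rcases n with _ | n
    · simp [P, I, Ppoly_zero]
    · simp [P, I, PowerSeries.coeff_mul, Finset.Nat.sum_antidiagonal_succ, Ppoly_succ]
  linear_combination h
end
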